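/- The sum of μ(S) over all atoms S ⊆ Ω with |S| ≥ 2 equals −Σ_{ω∈Ω} p(ω) log p(ω), the Shannon entropy of the discrete (singleton) partition of Ω. -/

import Mathlib

/-! `μ` is the Möbius transform of `T ↦ p(T) log p(T)` on the Boolean lattice of subsets, so
summing `μ` over all subsets of `Ω` gives back `p(Ω) log p(Ω) = 1 · log 1 = 0`. Since `μ(∅) = 0`
and `μ({ω}) = p(ω) log p(ω)`, the atoms with at least two points carry exactly the entropy. -/

open Finset BigOperators

variable {Ω : Type*} [Fintype Ω] [DecidableEq Ω]

/-- Probability of a subset: `p(T) = Σ_{ω∈T} p(ω)`. -/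
def pS (p : Ω → ℝ) (T : Finset Ω) : ℝ := ∑ ω ∈ T, p ω

/-- `p(T) log p(T)` (with `0 log 0 = 0` since `Real.log 0 = 0`). -/
noncomputable def plog (p : Ω → ℝ) (T : Finset Ω) : ℝ := pS p T * Real.log (pS p T)

/-- The interior-loss measure of an atom `S`. -/
noncomputable def mu (p : Ω → ℝ) (S : Finset Ω) : ℝ :=
  ∑ T ∈ S.powerset.filter (· ≠ ∅), (-1 : ℝ) ^ (S.card - T.card) * plog p T

/-- `μ` of a set of atoms, extended additively. -/
noncomputable def muSet (p : Ω → ℝ) (R : Finset (Finset Ω)) : ℝ := ∑ S ∈ R, mu p S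

/-- A partition `X` crosses an atom `S` when `S` meets at least two distinct parts. -/
def crossed (X : Finpartition (univ : Finset Ω)) (S : Finset Ω) : Prop :=
  ∃ P ∈ X.parts, ∃ Q ∈ X.parts, P ≠ Q ∧ (S ∩ P).Nonempty ∧ (S ∩ Q).Nonempty

open scoped Classical in
/-- The content `ΔX`: set of atoms crossed by the partition `X`. -/
noncomputable def content (X : Finpartition (univ : Finset Ω)) : Finset (Finset Ω) :=
  (univ : Finset (Finset Ω)).filter (fun S => 2 ≤ S.card ∧ crossed X S)

/-- Shannon entropy of a partition. -/
noncomputable def Hent (p : Ω → ℝ) (X : Finpartition (univ : Finset Ω)) : ℝ :=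
  - ∑ P ∈ X.parts, pS p P * Real.log (pS p P)

/-- `X` refines `Z`: every part of `X` lies in a part of `Z`. -/
def refines (X Z : Finpartition (univ : Finset Ω)) : Prop :=
  ∀ P ∈ X.parts, ∃ Q ∈ Z.parts, P ⊆ Q

namespace Finset

variable {α R : Type*} [DecidableEq α] [Ring R]

theorem sum_Icc_neg_one_pow_card_sub {s t : Finset α} (hst : s ⊆ t) :
    ∑ u ∈ Icc s t, (-1 : R) ^ (#u - #s) = if s = t then 1 else 0 := by
  have hinj : Set.InjOn (s ∪ ·) (t \ s).powerset := fun v hv w hw hvw => by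
    simp only [coe_powerset, Set.mem_preimage, Set.mem_powerset_iff, coe_subset,
      subset_sdiff] at hv hw
    calc v = (s ∪ v) \ s := (union_sdiff_cancel_left hv.2.symm).symm
      _ = w := (congrArg (· \ s) hvw).trans (union_sdiff_cancel_left hw.2.symm)
  rw [Icc_eq_image_powerset hst, sum_image hinj]
  rw [sum_congr rfl fun v hv => by
    rw [card_union_of_disjoint (subset_sdiff.mp (mem_powerset.mp hv)).2.symm,
      Nat.add_sub_cancel_left]]
  have hint := congrArg (Int.cast : ℤ → R) (sum_powerset_neg_one_pow_card (x := t \ s))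
  push_cast at hint
  rw [hint]
  exact if_congr (sdiff_eq_empty_iff_subset.trans ⟨hst.antisymm, fun h => h ▸ subset_rfl⟩)
    rfl rfl

theorem sum_powerset_sum_powerset_neg_one_pow_mul (f : Finset α → R) (t : Finset α) :
    ∑ u ∈ t.powerset, ∑ s ∈ u.powerset, (-1 : R) ^ (#u - #s) * f s = f t := by
  rw [sum_comm' (t' := t.powerset) (s' := fun s => Icc s t) fun u s => by
    simp only [mem_powerset, mem_Icc]
    exact ⟨fun h => ⟨⟨h.2, h.1⟩, h.2.trans h.1⟩, fun h => ⟨h.1.2, h.1.1⟩⟩]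
  rw [sum_congr rfl fun s hs => by
    rw [← sum_mul, sum_Icc_neg_one_pow_card_sub (mem_powerset.mp hs), ite_mul, one_mul,
      zero_mul]]
  rw [sum_ite_eq', if_pos (mem_powerset_self t)]

theorem univ_filter_not_two_le_card [Fintype α] :
    (univ : Finset (Finset α)).filter (fun s => ¬ 2 ≤ #s)
      = insert ∅ (univ.map ⟨singleton, singleton_injective⟩) := by
  ext s
  simp only [mem_filter, mem_univ, true_and, mem_insert, mem_map, Function.Embedding.coeFn_mk]
  rw [not_le, Nat.lt_succ_iff, Nat.le_one_iff_eq_zero_or_eq_one, card_eq_zero, card_eq_one]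
  simp [eq_comm]

end Finset

section

variable {α : Type*} [DecidableEq α] (p : α → ℝ)

theorem mu_eq_sum_powerset (s : Finset α) :
    mu p s = ∑ t ∈ s.powerset, (-1 : ℝ) ^ (#s - #t) * plog p t :=
  sum_filter_of_ne fun t _ ht h => ht (by simp [h, plog, pS])

theorem sum_powerset_mu (s : Finset α) : ∑ t ∈ s.powerset, mu p t = plog p s := by
  simp only [mu_eq_sum_powerset]
  exact sum_powerset_sum_powerset_neg_one_pow_mul (plog p) s

theorem mu_empty : mu p ∅ = 0 := by
  simp [mu_eq_sum_powerset, plog, pS]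

theorem mu_singleton (a : α) : mu p {a} = p a * Real.log (p a) := by
  rw [mu_eq_sum_powerset, ← insert_empty_eq, powerset_insert]
  simp [plog, pS]

end

theorem sum_mu_all_atoms_general {Ω : Type*} [Fintype Ω] [DecidableEq Ω] (p : Ω → ℝ)
    (hsum : ∑ ω, p ω = 1) :
    ∑ S ∈ (univ : Finset (Finset Ω)).filter (fun S => 2 ≤ S.card), mu p S
      = - ∑ ω, p ω * Real.log (p ω) := by
  have htotal : ∑ S, mu p S = 0 := by
    rw [← powerset_univ, sum_powerset_mu, plog, pS, hsum, Real.log_one, mul_zero]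
  rw [← sum_filter_add_sum_filter_not _ (fun S => 2 ≤ #S), univ_filter_not_two_le_card,
    sum_insert (by simp), sum_map] at htotal
  simp only [Function.Embedding.coeFn_mk, mu_empty, mu_singleton, zero_add] at htotal
  linarith

theorem sum_mu_all_atoms {Ω : Type*} [Fintype Ω] [DecidableEq Ω] (p : Ω → ℝ)
    (hp : ∀ ω, 0 ≤ p ω) (hsum : ∑ ω, p ω = 1) :
    ∑ S ∈ (univ : Finset (Finset Ω)).filter (fun S => 2 ≤ S.card), mu p S
      = - ∑ ω, p ω * Real.log (p ω) :=
  sum_mu_all_atoms_general p hsum
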